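/- Let 𝒜 be a closed set of impartial games that is nonempty and contains at least one game with an option (i.e. 𝒜 ≠ ∅ and 𝒜 is not just the zero game). Then for every G ∈ 𝒜 there exists H ∈ 𝒜 such that G + H is a misère P-position. -/

import Mathlib

universe u

namespace SetTheory

/-- Pre-games (removed from Mathlib; restated with the December 2024 Mathlib definition). -/
inductive PGame : Type (u + 1)
  | mk : ∀ α β : Type u, (α → PGame) → (β → PGame) → PGame

namespace PGame

/-- The type of left moves. -/
def LeftMoves : PGame.{u} → Type u
  | mk l _ _ _ => l

/-- The type of right moves. -/
def RightMoves : PGame.{u} → Type u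
  | mk _ r _ _ => r

/-- The game after a left move. -/
def moveLeft : ∀ g : PGame.{u}, LeftMoves g → PGame.{u}
  | mk _ _ L _ => L

/-- The game after a right move. -/
def moveRight : ∀ g : PGame.{u}, RightMoves g → PGame.{u}
  | mk _ _ _ R => R

/-- The pair (`x ≤ y`, `x ⧏ y`), defined by simultaneous recursion. -/
noncomputable def leLF (x : PGame.{u}) : PGame.{u} → Prop × Prop :=
  PGame.rec (motive := fun _ => PGame.{u} → Prop × Prop)
    (fun _ _ _ _ IHxl IHxr y =>
      PGame.rec (motive := fun _ => Prop × Prop)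
        (fun yl yr yL yR IHyl IHyr =>
          ((∀ i, (IHxl i (mk yl yr yL yR)).2) ∧ ∀ j, (IHyr j).2,
            (∃ i, (IHyl i).1) ∨ ∃ j, (IHxr j (mk yl yr yL yR)).1)) y) x

/-- The less-or-equal relation on pre-games. -/
noncomputable instance : LE PGame.{u} :=
  ⟨fun x y => (leLF x y).1⟩

/-- Equivalence of pre-games. -/
def Equiv (x y : PGame.{u}) : Prop :=
  x ≤ y ∧ y ≤ x

instance : HasEquiv PGame.{u} :=
  ⟨Equiv⟩

/-- Negation of pre-games. -/
def neg : PGame.{u} → PGame.{u}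
  | mk l r L R => mk r l (fun j => neg (R j)) (fun i => neg (L i))

instance : Neg PGame.{u} :=
  ⟨neg⟩

/-- Disjunctive sum of pre-games. -/
noncomputable def add (x : PGame.{u}) : PGame.{u} → PGame.{u} :=
  PGame.rec (motive := fun _ => PGame.{u} → PGame.{u})
    (fun xl xr _ _ IHxl IHxr y =>
      PGame.rec (motive := fun _ => PGame.{u})
        (fun yl yr yL yR IHyl IHyr =>
          mk (xl ⊕ yl) (xr ⊕ yr)
            (Sum.rec (fun i => IHxl i (mk yl yr yL yR)) IHyl)
            (Sum.rec (fun i => IHxr i (mk yl yr yL yR)) IHyr)) y) x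

noncomputable instance : Add PGame.{u} :=
  ⟨add⟩

/-- The definition for an impartial game. -/
def ImpartialAux : PGame.{u} → Prop
  | mk l r L R => (mk l r L R ≈ -mk l r L R) ∧ (∀ i, ImpartialAux (L i)) ∧ ∀ j, ImpartialAux (R j)

/-- A typeclass on impartial games. -/
class Impartial (G : PGame.{u}) : Prop where
  out : ImpartialAux G

end PGame

end SetTheory

open SetTheory PGame

/-- `G` is a misère P-position: `G` has at least one option and every option of `G` is a
misère N-position (i.e. not a misère P-position).  In particular the empty game `0` is a
misère N-position.  (For an impartial game the options are the left moves.) -/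
def MisereP : PGame → Prop
  | PGame.mk l _ L _ => Nonempty l ∧ ∀ i, ¬ MisereP (L i)

/-- A set of games is *closed* if it is closed under disjunctive sum and hereditarily
closed (every option of a member again belongs to the set). -/
def IsClosedFamily (A : Set PGame) : Prop :=
  (∀ G ∈ A, ∀ H ∈ A, G + H ∈ A) ∧
  (∀ G ∈ A, ∀ i : G.LeftMoves, G.moveLeft i ∈ A) ∧
  (∀ G ∈ A, ∀ j : G.RightMoves, G.moveRight j ∈ A)

/-!
A game with an option is a misère P-position or has one among its options, so `𝒜` contains a
misère P-position `P`. If `G` has no options, `G + P` plays exactly like `P`. Otherwise `G + G`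
has options; either it is itself a misère P-position, or one of its options `G' + G` is, and
then `H = G'` works.
-/

theorem misereP_iff (G : PGame) :
    MisereP G ↔ Nonempty G.LeftMoves ∧ ∀ i, ¬ MisereP (G.moveLeft i) := by
  cases G
  exact Iff.rfl

theorem misereP_or_exists_moveLeft_misereP {G : PGame} (hG : Nonempty G.LeftMoves) :
    MisereP G ∨ ∃ i, MisereP (G.moveLeft i) := by
  by_contra! h
  exact h.1 ((misereP_iff G).2 ⟨hG, h.2⟩)

theorem misereP_add_iff (x y : PGame) :
    MisereP (x + y) ↔ (Nonempty x.LeftMoves ∨ Nonempty y.LeftMoves) ∧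
      (∀ i, ¬ MisereP (x.moveLeft i + y)) ∧ ∀ j, ¬ MisereP (x + y.moveLeft j) := by
  cases x
  cases y
  exact and_congr nonempty_sum Sum.forall

theorem exists_misereP_moveLeft_add_or_add_moveLeft {x y : PGame}
    (hx : Nonempty x.LeftMoves) (h : ¬ MisereP (x + y)) :
    (∃ i, MisereP (x.moveLeft i + y)) ∨ ∃ j, MisereP (x + y.moveLeft j) := by
  by_contra! h'
  exact h ((misereP_add_iff x y).2 ⟨Or.inl hx, h'⟩)

theorem misereP_add_comm (x y : PGame) : MisereP (x + y) ↔ MisereP (y + x) := by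
  induction x generalizing y with
  | mk xl xr xL xR ihx =>
    induction y with
    | mk yl yr yL yR ihy =>
      rw [misereP_add_iff, misereP_add_iff, or_comm, and_comm (a := ∀ _, _)]
      simp only [LeftMoves, moveLeft, ihx, ihy]

theorem misereP_add_of_isEmpty {x : PGame} (hx : IsEmpty x.LeftMoves) (y : PGame) :
    MisereP (x + y) ↔ MisereP y := by
  induction y with
  | mk yl yr yL yR ihy =>
    rw [misereP_add_iff, misereP_iff]
    simp only [not_nonempty_iff.2 hx, false_or, IsEmpty.forall_iff, true_and]
    simp only [LeftMoves, moveLeft, ihy]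

theorem exists_misereP_mem {A : Set PGame} (hA : ∀ G ∈ A, ∀ i : G.LeftMoves, G.moveLeft i ∈ A)
    (hA₁ : ∃ G ∈ A, Nonempty G.LeftMoves) : ∃ H ∈ A, MisereP H := by
  obtain ⟨G, hG, hG1⟩ := hA₁
  rcases misereP_or_exists_moveLeft_misereP hG1 with hP | ⟨i, hP⟩
  · exact ⟨G, hG, hP⟩
  · exact ⟨G.moveLeft i, hA G hG i, hP⟩

theorem exists_misere_P_partner_general (A : Set PGame) (hA : IsClosedFamily A)
    (hnontriv : ∃ G ∈ A, Nonempty G.LeftMoves) :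
    ∀ G ∈ A, ∃ H ∈ A, MisereP (G + H) := by
  intro G hG
  rcases isEmpty_or_nonempty G.LeftMoves with hG0 | hG1
  · obtain ⟨H, hH, hP⟩ := exists_misereP_mem hA.2.1 hnontriv
    exact ⟨H, hH, (misereP_add_of_isEmpty hG0 H).2 hP⟩
  by_cases hGG : MisereP (G + G)
  · exact ⟨G, hG, hGG⟩
  rcases exists_misereP_moveLeft_add_or_add_moveLeft hG1 hGG with ⟨i, hP⟩ | ⟨i, hP⟩
  · exact ⟨G.moveLeft i, hA.2.1 G hG i, (misereP_add_comm _ _).1 hP⟩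
  · exact ⟨G.moveLeft i, hA.2.1 G hG i, hP⟩

/-- Let `𝒜` be a closed set of impartial games that is nonempty and contains at least
one game with an option (so `𝒜 ≠ ∅` and `𝒜` is not just the zero game).  Then for every
`G ∈ 𝒜` there exists `H ∈ 𝒜` such that `G + H` is a misère P-position. -/
theorem exists_misere_P_partner (A : Set PGame) (hImp : ∀ G ∈ A, G.Impartial)
    (hA : IsClosedFamily A) (hne : A.Nonempty)
    (hnontriv : ∃ G ∈ A, Nonempty G.LeftMoves) :
    ∀ G ∈ A, ∃ H ∈ A, MisereP (G + H) :=
  exists_misere_P_partner_general A hA hnontriv
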